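/- arXiv:2108.00618 — 5 statements merged into one kernel-verified Lean document; each statement's English description precedes it below -/
import Mathlib

section
/- Among all simplicial complexes K ⊊ 2^[n] with ∅ ∈ K, when n = 2m+1 is odd, the number of pairs (A, ν) with A ∈ K, ν ∉ A, A ∪ {ν} ∉ K is uniquely maximized by K = { S ⊆ [n] : |S| ≤ m }. -/
/-!
Counting separately the pairs `(A, ν)` with `ν ∉ A` according to whether `A ∪ {ν}` lies in `K`,
and matching those with `A ∪ {ν} ∈ K` to the pairs `(B, ν)` with `ν ∈ B ∈ K`, shows that for a
simplicial complex `K` on `n` vertices the facet count of `Bier(K)` is `∑_{A ∈ K} (n - 2|A|)`.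
This is a sum of weights over `K`, and is therefore maximized exactly by taking all sets of
positive weight, i.e. `|A| ≤ m` when `n = 2m + 1`; no weight vanishes as `n` is odd, so the
maximizer is unique.
-/

/-- The number of facets of `Bier(K)`, counted as pairs `(A, ν)` with
`A ∈ K`, `ν ∉ A`, `A ∪ {ν} ∉ K`. -/
def bierFacetCount {n : ℕ} (K : Finset (Finset (Fin n))) : ℕ :=
  ((K ×ˢ (Finset.univ : Finset (Fin n))).filter
    (fun p => p.2 ∉ p.1 ∧ insert p.2 p.1 ∉ K)).card

open Finset

section PositivePart

variable {ι M : Type*} [AddCommMonoid M] [LinearOrder M] [IsOrderedCancelAddMonoid M]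
  {s t : Finset ι} {f : ι → M}

theorem sum_filter_pos_le_sum_filter_pos (h : s ⊆ t) :
    ∑ i ∈ s with 0 < f i, f i ≤ ∑ i ∈ t with 0 < f i, f i :=
  sum_le_sum_of_subset_of_nonneg (filter_subset_filter _ h) fun _ hi _ => (mem_filter.mp hi).2.le

theorem sum_le_sum_filter_pos_of_subset (h : s ⊆ t) :
    ∑ i ∈ s, f i ≤ ∑ i ∈ t with 0 < f i, f i :=
  calc ∑ i ∈ s, f i = ∑ i ∈ s with 0 < f i, f i + ∑ i ∈ s with ¬0 < f i, f i :=
        (sum_filter_add_sum_filter_not _ _ _).symm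
    _ ≤ ∑ i ∈ s with 0 < f i, f i :=
        add_le_of_nonpos_right (sum_nonpos fun _ hi => not_lt.mp (mem_filter.mp hi).2)
    _ ≤ ∑ i ∈ t with 0 < f i, f i := sum_filter_pos_le_sum_filter_pos h

theorem sum_lt_sum_filter_pos_of_subset (h : s ⊆ t) (hf : ∀ i ∈ t, f i ≠ 0)
    (hne : s ≠ t.filter (0 < f ·)) : ∑ i ∈ s, f i < ∑ i ∈ t with 0 < f i, f i := by
  by_cases hpos : s ⊆ t.filter (0 < f ·)
  · obtain ⟨j, hjt, hjs⟩ := exists_of_ssubset (ssubset_of_subset_of_ne hpos hne)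
    exact sum_lt_sum_of_subset hpos hjt hjs (mem_filter.mp hjt).2
      fun k hk _ => (mem_filter.mp hk).2.le
  · obtain ⟨i, hi, hit⟩ := not_subset.mp hpos
    have hneg : ∑ i ∈ s with ¬0 < f i, f i < 0 := by
      refine sum_neg (fun j hj => ?_) ⟨i, mem_filter.mpr ⟨hi, fun hfi => hit ?_⟩⟩
      · rw [mem_filter] at hj
        exact (not_lt.mp hj.2).lt_of_ne (hf j (h hj.1))
      · exact mem_filter.mpr ⟨h hi, hfi⟩
    calc ∑ i ∈ s, f i = ∑ i ∈ s with 0 < f i, f i + ∑ i ∈ s with ¬0 < f i, f i :=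
          (sum_filter_add_sum_filter_not _ _ _).symm
      _ < ∑ i ∈ s with 0 < f i, f i := add_lt_of_neg_right _ hneg
      _ ≤ ∑ i ∈ t with 0 < f i, f i := sum_filter_pos_le_sum_filter_pos h

end PositivePart

section DoubleCounting

variable {α : Type*} [Fintype α]

theorem card_filter_product_univ (K : Finset (Finset α)) (P : Finset α → α → Prop)
    [∀ A ν, Decidable (P A ν)] :
    #{p ∈ K ×ˢ univ | P p.1 p.2} = ∑ A ∈ K, #{ν | P A ν} := by
  simp only [card_filter, sum_product]

theorem card_filter_insert_mem [DecidableEq α] {K : Finset (Finset α)}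
    (hK : ∀ s ∈ K, ∀ t ⊆ s, t ∈ K) :
    #{p ∈ K ×ˢ univ | p.2 ∉ p.1 ∧ insert p.2 p.1 ∈ K} = ∑ B ∈ K, #B :=
  calc #{p ∈ K ×ˢ univ | p.2 ∉ p.1 ∧ insert p.2 p.1 ∈ K}
      = #{p ∈ K ×ˢ univ | p.2 ∈ p.1} := by
        refine card_nbij' (fun p => (insert p.2 p.1, p.2)) (fun p => (p.1.erase p.2, p.2))
          ?_ ?_ ?_ ?_ <;> intro p hp <;>
          simp only [coe_filter, mem_product, mem_univ, and_true, Set.mem_ofPred_eq] at hp ⊢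
        · exact ⟨hp.2.2, mem_insert_self _ _⟩
        · rw [insert_erase hp.2]
          exact ⟨hK _ hp.1 _ (erase_subset _ _), notMem_erase _ _, hp.1⟩
        · rw [erase_insert hp.2.1]
        · rw [insert_erase hp.2]
    _ = ∑ B ∈ K, #B := by
        rw [card_filter_product_univ K (fun B ν => ν ∈ B)]
        simp

end DoubleCounting

theorem bierFacetCount_add_card_filter_insert_mem {n : ℕ} (K : Finset (Finset (Fin n))) :
    bierFacetCount K + #{p ∈ K ×ˢ univ | p.2 ∉ p.1 ∧ insert p.2 p.1 ∈ K}
      = ∑ A ∈ K, (n - #A) := by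
  rw [bierFacetCount, card_filter_product_univ K (fun A ν => ν ∉ A ∧ insert ν A ∉ K),
    card_filter_product_univ K (fun A ν => ν ∉ A ∧ insert ν A ∈ K), ← sum_add_distrib]
  refine sum_congr rfl fun A _ => ?_
  rw [← filter_filter, ← filter_filter, add_comm, card_filter_add_card_filter_not,
    filter_notMem_eq_sdiff, card_univ_sdiff, Fintype.card_fin]

theorem bierFacetCount_eq_sum {n : ℕ} {K : Finset (Finset (Fin n))}
    (hK : ∀ s ∈ K, ∀ t ⊆ s, t ∈ K) :
    (bierFacetCount K : ℤ) = ∑ A ∈ K, ((n : ℤ) - 2 * #A) := by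
  have h := congrArg (Nat.cast : ℕ → ℤ) (bierFacetCount_add_card_filter_insert_mem K)
  rw [card_filter_insert_mem hK] at h
  push_cast at h
  rw [eq_sub_of_add_eq h, ← sum_sub_distrib]
  refine sum_congr rfl fun A _ => ?_
  rw [Nat.cast_sub ((card_le_univ A).trans_eq (Fintype.card_fin n))]
  ring

theorem mem_powerset_filter_card_le_of_subset {α : Type*} [Fintype α] {m : ℕ}
    {s t : Finset α} (hs : s ∈ (univ : Finset α).powerset.filter (·.card ≤ m)) (hts : t ⊆ s) :
    t ∈ (univ : Finset α).powerset.filter (·.card ≤ m) := by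
  simp only [mem_filter, mem_powerset, subset_univ, true_and] at hs ⊢
  exact (card_le_card hts).trans hs

theorem bier_facet_count_odd_max_general (m : ℕ) (K : Finset (Finset (Fin (2*m+1))))
    (hK : ∀ s ∈ K, ∀ t ⊆ s, t ∈ K) :
    bierFacetCount K
      ≤ bierFacetCount ((Finset.univ : Finset (Fin (2*m+1))).powerset.filter
          (fun S => S.card ≤ m)) ∧
    (bierFacetCount K
        = bierFacetCount ((Finset.univ : Finset (Fin (2*m+1))).powerset.filter
            (fun S => S.card ≤ m)) →
      K = (Finset.univ : Finset (Fin (2*m+1))).powerset.filter (fun S => S.card ≤ m)) := by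
  set w : Finset (Fin (2*m+1)) → ℤ := fun A => ((2*m+1 : ℕ) : ℤ) - 2 * #A
  have hKm : (univ : Finset (Fin (2*m+1))).powerset.filter (fun S => S.card ≤ m)
      = univ.powerset.filter (0 < w ·) :=
    filter_congr fun S _ => by simp only [w]; omega
  have hsub : K ⊆ univ.powerset := fun A _ => mem_powerset.mpr (subset_univ A)
  have hw : ∀ A ∈ (univ : Finset (Fin (2*m+1))).powerset, w A ≠ 0 := fun A _ => by
    simp only [w]; omega
  rw [← Int.ofNat_le, ← Int.natCast_inj, bierFacetCount_eq_sum hK,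
    bierFacetCount_eq_sum fun _ hs _ hts => mem_powerset_filter_card_le_of_subset hs hts, hKm]
  exact ⟨sum_le_sum_filter_pos_of_subset hsub,
    fun heq => by_contra fun hne => (sum_lt_sum_filter_pos_of_subset hsub hw hne).ne heq⟩

theorem bier_facet_count_odd_max (m : ℕ) (K : Finset (Finset (Fin (2*m+1))))
    (hK : ∀ s ∈ K, ∀ t ⊆ s, t ∈ K) (h0 : ∅ ∈ K)
    (hu : (Finset.univ : Finset (Fin (2*m+1))) ∉ K) :
    bierFacetCount K
      ≤ bierFacetCount ((Finset.univ : Finset (Fin (2*m+1))).powerset.filter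
          (fun S => S.card ≤ m)) ∧
    (bierFacetCount K
        = bierFacetCount ((Finset.univ : Finset (Fin (2*m+1))).powerset.filter
            (fun S => S.card ≤ m)) →
      K = (Finset.univ : Finset (Fin (2*m+1))).powerset.filter (fun S => S.card ≤ m)) :=
  bier_facet_count_odd_max_general m K hK
end

section
/- When n = 2m is even, a simplicial complex K ⊊ 2^[n] with ∅ ∈ K maximizes the count |{ (A, ν) : A ∈ K, ν ∉ A, A ∪ {ν} ∉ K }| if and only if { S : |S| ≤ m−1 } ⊆ K ⊆ { S : |S| ≤ m }. -/
open Finset Nat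

def facetWeight (n k : ℕ) : ℕ := k ! * (n - 1 - k)!

theorem facetWeight_pos (n k : ℕ) : 0 < facetWeight n k := by
  unfold facetWeight; positivity

theorem sub_mul_facetWeight {n k : ℕ} (h : k < n) :
    (n - k) * facetWeight n k = k ! * (n - k)! := by
  rw [facetWeight, mul_left_comm, show n - 1 - k = n - k - 1 by omega,
    mul_factorial_pred (by omega)]

theorem mul_facetWeight_pred {n k : ℕ} (h : 0 < k) :
    k * facetWeight n (k - 1) = k ! * (n - k)! := by
  rw [facetWeight, ← mul_assoc, mul_factorial_pred h.ne', show n - 1 - (k - 1) = n - k by omega]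

theorem facetWeight_sub_one_sub {n k : ℕ} (h : k < n) :
    facetWeight n (n - 1 - k) = facetWeight n k := by
  rw [facetWeight, facetWeight, Nat.sub_sub_self (by omega), mul_comm]

theorem sub_one_sub_mul_facetWeight_succ {n k : ℕ} (h : k + 1 < n) :
    (n - 1 - k) * facetWeight n (k + 1) = (k + 1) * facetWeight n k := by
  rw [facetWeight, facetWeight, factorial_succ, show n - 1 - (k + 1) = n - 1 - k - 1 by omega,
    ← mul_factorial_pred (show n - 1 - k ≠ 0 by omega)]
  ring

theorem facetWeight_strictAntiOn (n : ℕ) : StrictAntiOn (facetWeight n) (Set.Iic ((n - 1) / 2)) :=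
  strictAntiOn_Iic_of_succ_lt fun k hk => by
    have hstep := sub_one_sub_mul_facetWeight_succ (n := n) (k := k) (by omega)
    have hlt : k + 1 < n - 1 - k := by omega
    rw [Order.succ_eq_add_one]
    by_contra! hle
    have := Nat.mul_lt_mul_of_pos_right hlt (facetWeight_pos n k)
    have := Nat.mul_le_mul_left (n - 1 - k) hle
    omega

section HalfWeight

variable {m k : ℕ}

theorem facetWeight_pred_half (hm : 0 < m) :
    facetWeight (2 * m) (m - 1) = facetWeight (2 * m) m := by
  have := facetWeight_sub_one_sub (n := 2 * m) (k := m) (by omega)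
  rwa [show 2 * m - 1 - m = m - 1 by omega] at this

theorem facetWeight_half_lt (hk : k < 2 * m) (hlo : k ≠ m - 1) (hhi : k ≠ m) :
    facetWeight (2 * m) m < facetWeight (2 * m) k := by
  have anti := facetWeight_strictAntiOn (2 * m)
  rw [show (2 * m - 1) / 2 = m - 1 by omega] at anti
  rw [← facetWeight_pred_half (by omega)]
  rcases lt_or_gt_of_ne hlo with h | h
  · exact anti (Set.mem_Iic.2 h.le) (Set.mem_Iic.2 le_rfl) h
  · rw [← facetWeight_sub_one_sub hk]
    exact anti (Set.mem_Iic.2 (by omega)) (Set.mem_Iic.2 le_rfl) (by omega)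

theorem facetWeight_half_le (hk : k < 2 * m) : facetWeight (2 * m) m ≤ facetWeight (2 * m) k := by
  by_cases hlo : k = m - 1
  · rw [hlo, facetWeight_pred_half (by omega)]
  by_cases hhi : k = m
  · rw [hhi]
  exact (facetWeight_half_lt hk hlo hhi).le

theorem facetWeight_eq_half_iff (hk : k < 2 * m) :
    facetWeight (2 * m) k = facetWeight (2 * m) m ↔ m - 1 ≤ k ∧ k ≤ m := by
  refine ⟨fun h => ?_, fun h => ?_⟩
  · by_contra hk'
    exact (facetWeight_half_lt hk (by omega) (by omega)).ne' h
  · rcases (show k = m - 1 ∨ k = m by omega) with rfl | rfl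
    · exact facetWeight_pred_half (by omega)
    · rfl

theorem mul_choose_mul_facetWeight_half (hm : 0 < m) :
    m * (2 * m).choose m * facetWeight (2 * m) m = (2 * m)! := by
  have hcentral := choose_mul_factorial_mul_factorial (show m ≤ 2 * m by omega)
  rw [show 2 * m - m = m by omega] at hcentral
  rw [facetWeight, show 2 * m - 1 - m = m - 1 by omega, ← hcentral, ← mul_factorial_pred hm.ne']
  ring

end HalfWeight

section CutEdges

variable {α : Type*} [Fintype α] [DecidableEq α] {K : Finset (Finset α)} {m : ℕ}

-- The edges `A → A ∪ {ν}` of the Boolean lattice that leave `K`: the facets of `Bier(K)`.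
def cutEdges (K : Finset (Finset α)) : Finset (Finset α × α) :=
  (K ×ˢ univ).filter fun p => p.2 ∉ p.1 ∧ insert p.2 p.1 ∉ K

theorem bierFacetCount_eq_card_cutEdges {n : ℕ} (K : Finset (Finset (Fin n))) :
    bierFacetCount K = #(cutEdges K) :=
  rfl

theorem mem_cutEdges {p : Finset α × α} :
    p ∈ cutEdges K ↔ p.1 ∈ K ∧ p.2 ∉ p.1 ∧ insert p.2 p.1 ∉ K := by
  simp [cutEdges]

theorem card_fst_lt_of_mem_cutEdges {p : Finset α × α} (hp : p ∈ cutEdges K) :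
    #p.1 < Fintype.card α :=
  card_lt_univ_of_notMem (mem_cutEdges.1 hp).2.1

theorem exists_mem_cutEdges {S T : Finset α} (hT : T ∈ K) (hTS : T ⊆ S) (hS : S ∉ K) :
    ∃ p ∈ cutEdges K, T ⊆ p.1 ∧ insert p.2 p.1 ⊆ S := by
  obtain ⟨A, hA, hAmax⟩ := (K.filter fun A => T ⊆ A ∧ A ⊆ S).exists_max_image card
    ⟨T, mem_filter.2 ⟨hT, subset_rfl, hTS⟩⟩
  obtain ⟨hAK, hTA, hAS⟩ := mem_filter.1 hA
  obtain ⟨ν, hνS, hνA⟩ := exists_of_ssubset (hAS.ssubset_of_ne fun h => hS (h ▸ hAK))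
  refine ⟨(A, ν), mem_cutEdges.2 ⟨hAK, hνA, fun hins => ?_⟩, hTA, insert_subset hνS hAS⟩
  have := hAmax _ (mem_filter.2 ⟨hins, hTA.trans (subset_insert ν A), insert_subset hνS hAS⟩)
  rw [card_insert_of_notMem hνA] at this
  omega

theorem sum_card_compl_smul_eq {M : Type*} [AddCommMonoid M]
    (hK : IsLowerSet (K : Set (Finset α))) (f : Finset α → M) :
    ∑ A ∈ K, #Aᶜ • f A =
      ∑ p ∈ cutEdges K, f p.1 + ∑ B ∈ K, ∑ ν ∈ B, f (B.erase ν) := by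
  -- A pair `(A, ν)` with `ν ∉ A` either leaves `K` or is reindexed by `B = insert ν A ∈ K`.
  set up := (K ×ˢ univ).filter fun p => p.2 ∉ p.1
  have hup : ∑ A ∈ K, #Aᶜ • f A = ∑ p ∈ up, f p.1 := by
    rw [sum_finset_product' up K compl (f := fun A _ => f A) (by simp [up])]
    simp only [sum_const]
  have hdown : ∑ p ∈ up.filter (fun p => insert p.2 p.1 ∈ K), f p.1 =
      ∑ B ∈ K, ∑ ν ∈ B, f (B.erase ν) := by
    rw [← sum_finset_product' ((K ×ˢ univ).filter fun p => p.2 ∈ p.1) K (fun B => B)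
      (f := fun B ν => f (B.erase ν)) (by simp)]
    refine sum_nbij' (fun p => (insert p.2 p.1, p.2)) (fun p => (p.1.erase p.2, p.2))
      ?_ ?_ ?_ ?_ ?_
    · simp +contextual [up]
    · simp only [up, mem_filter, mem_product, mem_univ, and_true]
      rintro ⟨B, ν⟩ ⟨hB, hν⟩
      exact ⟨⟨hK (erase_subset ν B) hB, notMem_erase ν B⟩, by rwa [insert_erase hν]⟩
    · simp +contextual [up]
    · simp +contextual [insert_erase]
    · simp +contextual [up]
  rw [hup, ← sum_filter_not_add_sum_filter _ (fun p => insert p.2 p.1 ∈ K), hdown,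
    filter_filter]
  rfl

theorem forall_mem_cutEdges_card_iff (h0 : ∅ ∈ K) (hu : univ ∉ K) (a b : ℕ) :
    (∀ p ∈ cutEdges K, a ≤ #p.1 ∧ #p.1 ≤ b) ↔
      univ.powerset.filter (fun S => #S ≤ a) ⊆ K ∧
        K ⊆ univ.powerset.filter (fun S => #S ≤ b) := by
  simp only [subset_iff, mem_filter, mem_powerset, mem_univ, implies_true, true_and]
  refine ⟨fun hE => ⟨fun S hS => ?_, fun A hA => ?_⟩, fun ⟨hlo, hhi⟩ p hp => ?_⟩
  · by_contra hSK
    obtain ⟨p, hp, -, hpS⟩ := exists_mem_cutEdges h0 (empty_subset S) hSK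
    have := card_le_card hpS
    rw [card_insert_of_notMem (mem_cutEdges.1 hp).2.1] at this
    have := (hE p hp).1
    omega
  · obtain ⟨p, hp, hAp, -⟩ := exists_mem_cutEdges hA (subset_univ A) hu
    exact (card_le_card hAp).trans (hE p hp).2
  · obtain ⟨hA, hν, hins⟩ := mem_cutEdges.1 hp
    refine ⟨?_, hhi hA⟩
    by_contra! h
    exact hins (hlo (by rw [card_insert_of_notMem hν]; omega))

theorem sum_cutEdges_facetWeight (hK : IsLowerSet (K : Set (Finset α))) (h0 : ∅ ∈ K)
    (hu : univ ∉ K) :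
    ∑ p ∈ cutEdges K, facetWeight (Fintype.card α) #p.1 = (Fintype.card α)! := by
  set n := Fintype.card α
  have key := sum_card_compl_smul_eq hK fun A => facetWeight n #A
  have hup : ∑ A ∈ K, #Aᶜ • facetWeight n #A = ∑ A ∈ K, (#A)! * (n - #A)! :=
    sum_congr rfl fun A hA => by
      rw [smul_eq_mul, card_compl,
        sub_mul_facetWeight ((card_lt_iff_ne_univ A).2 (ne_of_mem_of_not_mem hA hu))]
  have hdown : ∑ B ∈ K, ∑ ν ∈ B, facetWeight n #(B.erase ν) =
      ∑ B ∈ K.erase ∅, (#B)! * (n - #B)! := by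
    rw [← sum_erase K (sum_empty (f := fun ν => facetWeight n #((∅ : Finset α).erase ν)))]
    refine sum_congr rfl fun B hB => ?_
    rw [sum_congr rfl fun ν hν => by rw [card_erase_of_mem hν], sum_const, smul_eq_mul,
      mul_facetWeight_pred (card_pos.2 (nonempty_iff_ne_empty.2 (ne_of_mem_erase hB)))]
  rw [hup, hdown, ← add_sum_erase K _ h0, card_empty, factorial_zero, one_mul, Nat.sub_zero]
    at key
  omega

theorem sum_cutEdges_facetWeight_eq (hα : Fintype.card α = 2 * m) (hm : 0 < m)
    (hK : IsLowerSet (K : Set (Finset α))) (h0 : ∅ ∈ K) (hu : univ ∉ K) :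
    ∑ p ∈ cutEdges K, facetWeight (2 * m) #p.1 =
      m * (2 * m).choose m * facetWeight (2 * m) m := by
  rw [mul_choose_mul_facetWeight_half hm, ← hα, sum_cutEdges_facetWeight hK h0 hu]

theorem facetWeight_half_le_of_mem_cutEdges (hα : Fintype.card α = 2 * m) {p : Finset α × α}
    (hp : p ∈ cutEdges K) : facetWeight (2 * m) m ≤ facetWeight (2 * m) #p.1 :=
  facetWeight_half_le (hα ▸ card_fst_lt_of_mem_cutEdges hp)

theorem card_cutEdges_le (hα : Fintype.card α = 2 * m) (hm : 0 < m)
    (hK : IsLowerSet (K : Set (Finset α))) (h0 : ∅ ∈ K) (hu : univ ∉ K) :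
    #(cutEdges K) ≤ m * (2 * m).choose m := by
  refine Nat.le_of_mul_le_mul_right ?_ (facetWeight_pos (2 * m) m)
  calc #(cutEdges K) * facetWeight (2 * m) m = ∑ _p ∈ cutEdges K, facetWeight (2 * m) m := by
        rw [sum_const, smul_eq_mul]
    _ ≤ ∑ p ∈ cutEdges K, facetWeight (2 * m) #p.1 :=
        sum_le_sum fun p hp => facetWeight_half_le_of_mem_cutEdges hα hp
    _ = m * (2 * m).choose m * facetWeight (2 * m) m :=
        sum_cutEdges_facetWeight_eq hα hm hK h0 hu

theorem card_cutEdges_eq_iff (hα : Fintype.card α = 2 * m) (hm : 0 < m)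
    (hK : IsLowerSet (K : Set (Finset α))) (h0 : ∅ ∈ K) (hu : univ ∉ K) :
    #(cutEdges K) = m * (2 * m).choose m ↔
      univ.powerset.filter (fun S => #S ≤ m - 1) ⊆ K ∧
        K ⊆ univ.powerset.filter (fun S => #S ≤ m) := by
  rw [← Nat.mul_left_inj (facetWeight_pos (2 * m) m).ne', ← smul_eq_mul, ← sum_const,
    ← sum_cutEdges_facetWeight_eq hα hm hK h0 hu,
    sum_eq_sum_iff_of_le fun p hp => facetWeight_half_le_of_mem_cutEdges hα hp]
  refine (forall₂_congr fun p hp => ?_).trans (forall_mem_cutEdges_card_iff h0 hu _ _)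
  exact eq_comm.trans (facetWeight_eq_half_iff (hα ▸ card_fst_lt_of_mem_cutEdges hp))

end CutEdges

theorem bier_facet_count_even_max (m : ℕ) (hm : 0 < m)
    (K : Finset (Finset (Fin (2*m))))
    (hK : ∀ s ∈ K, ∀ t ⊆ s, t ∈ K) (h0 : ∅ ∈ K)
    (hu : (Finset.univ : Finset (Fin (2*m))) ∉ K) :
    (∀ K' : Finset (Finset (Fin (2*m))),
        (∀ s ∈ K', ∀ t ⊆ s, t ∈ K') → ∅ ∈ K' →
        (Finset.univ : Finset (Fin (2*m))) ∉ K' →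
        bierFacetCount K' ≤ bierFacetCount K)
      ↔ ((Finset.univ : Finset (Fin (2*m))).powerset.filter (fun S => S.card ≤ m - 1) ⊆ K
          ∧ K ⊆ (Finset.univ : Finset (Fin (2*m))).powerset.filter (fun S => S.card ≤ m)) := by
  have hα : Fintype.card (Fin (2 * m)) = 2 * m := Fintype.card_fin _
  have lower : ∀ K' : Finset (Finset (Fin (2 * m))), (∀ s ∈ K', ∀ t ⊆ s, t ∈ K') →
      IsLowerSet (K' : Set (Finset (Fin (2 * m)))) :=
    fun K' hK' s t hts hs => hK' s hs t hts
  set K₀ := (univ : Finset (Fin (2 * m))).powerset.filter (fun S => #S ≤ m - 1)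
  have hK₀ : ∀ s ∈ K₀, ∀ t ⊆ s, t ∈ K₀ := fun s hs t hts => by
    simp only [K₀, mem_filter, mem_powerset] at hs ⊢
    exact ⟨subset_univ t, (card_le_card hts).trans hs.2⟩
  have h0₀ : ∅ ∈ K₀ := by simp [K₀]
  have hu₀ : univ ∉ K₀ := by simp [K₀]; omega
  have hcount₀ : #(cutEdges K₀) = m * (2 * m).choose m :=
    (card_cutEdges_eq_iff hα hm (lower K₀ hK₀) h0₀ hu₀).2
      ⟨subset_rfl, monotone_filter_right _ fun S h => by omega⟩
  simp only [bierFacetCount_eq_card_cutEdges]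
  rw [← card_cutEdges_eq_iff hα hm (lower K hK) h0 hu]
  refine ⟨fun hmax => ?_, fun hK_eq K' hK' h0' hu' => ?_⟩
  · exact (card_cutEdges_le hα hm (lower K hK) h0 hu).antisymm
      (hcount₀ ▸ hmax K₀ hK₀ h0₀ hu₀)
  · rw [hK_eq]
    exact card_cutEdges_le hα hm (lower K' hK') h0' hu'
end

section
/- Let u_1,...,u_n be a circuit in ℝ^{n-1} (spanning, with Σ u_i = 0), Δ = conv{u_1,...,u_n}, ∇ = −Δ. For x = Σ λ_i u_i with Σ λ_i = 0, the Minkowski functional of Δ satisfies μ_Δ(x) = n · max_i (λ_i)^−, where (t)^− = max{0, −t}. -/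
/-!
Since `u` is a circuit, the linear relations `∑ dᵢ uᵢ = 0` are exactly the constant families
`d = c • 1`. Hence the representations of `x = ∑ λᵢ uᵢ` with coefficient sum `r` are exactly
`λ + (r / n) • 1`, so `x ∈ r • Δ` iff `λᵢ + r / n ≥ 0` for all `i`, that is iff
`r ≥ n · maxᵢ (λᵢ)⁻`.
-/

open Module Set Submodule Pointwise

theorem ker_linearCombination_eq_span_one {K E ι : Type*} [Field K] [AddCommGroup E] [Module K E]
    [FiniteDimensional K E] [Fintype ι] (u : ι → E)
    (hspan : span K (range u) = ⊤) (hsum : ∑ i, u i = 0)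
    (hcard : finrank K E + 1 = Fintype.card ι) :
    LinearMap.ker (Fintype.linearCombination K u) = K ∙ 1 := by
  have : Nonempty ι := Fintype.card_pos_iff.mp (by omega)
  have hone : (1 : ι → K) ∈ LinearMap.ker (Fintype.linearCombination K u) := by
    simp [Fintype.linearCombination_apply, hsum]
  have hrank := LinearMap.finrank_range_add_finrank_ker (Fintype.linearCombination K u)
  rw [Fintype.range_linearCombination, hspan, finrank_top, finrank_fintype_fun_eq_card] at hrank
  refine (eq_of_le_of_finrank_le ((span_singleton_le_iff_mem _ _).mpr hone) ?_).symm
  rw [finrank_span_singleton one_ne_zero]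
  omega

section Gauge

variable {E ι : Type*} [AddCommGroup E] [Module ℝ E]

theorem gauge_eq_of_mem_smul_iff {s : Set E} {x : E} {a : ℝ} (ha : 0 ≤ a)
    (h : ∀ r, 0 < r → (x ∈ r • s ↔ a ≤ r)) : gauge s x = a := by
  have hset : {r | r ∈ Ioi 0 ∧ x ∈ r • s} = Ioi 0 ∩ Ici a := by
    ext r
    exact and_congr_right (h r)
  rw [gauge_def, hset]
  rcases ha.eq_or_lt with rfl | ha
  · rw [inter_eq_left.mpr Ioi_subset_Ici_self, csInf_Ioi]
  · rw [inter_eq_right.mpr (Ici_subset_Ioi.mpr ha), csInf_Ici]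

variable [Fintype ι] {u : ι → E}

theorem convexHull_range_eq_image_stdSimplex (u : ι → E) :
    convexHull ℝ (range u) = Fintype.linearCombination ℝ u '' stdSimplex ℝ ι := by
  classical
  rw [← convexHull_rangle_single_eq_stdSimplex, LinearMap.image_convexHull, ← range_comp]
  congr 2
  ext i
  simp [Fintype.linearCombination_apply, Pi.single_apply]

theorem mem_smul_convexHull_range_iff {r : ℝ} (hr : 0 < r) {x : E} :
    x ∈ r • convexHull ℝ (range u) ↔
      ∃ w : ι → ℝ, (∀ i, 0 ≤ w i) ∧ ∑ i, w i = r ∧ Fintype.linearCombination ℝ u w = x := by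
  simp only [convexHull_range_eq_image_stdSimplex, ← Set.image_smul, Set.image_image, ← map_smul,
    Set.mem_image, stdSimplex, Set.mem_ofPred_eq]
  constructor
  · rintro ⟨w, ⟨hw₀, hw₁⟩, rfl⟩
    exact ⟨r • w, fun i => mul_nonneg hr.le (hw₀ i), by simp [← Finset.mul_sum, hw₁], rfl⟩
  · rintro ⟨w, hw₀, hw₁, rfl⟩
    refine ⟨r⁻¹ • w, ⟨fun i => mul_nonneg (inv_nonneg.mpr hr.le) (hw₀ i), ?_⟩, ?_⟩
    · simp [← Finset.mul_sum, hw₁, hr.ne']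
    · simp [smul_smul, hr.ne']

variable [Nonempty ι]

theorem linearCombination_mem_smul_convexHull_iff
    (hker : LinearMap.ker (Fintype.linearCombination ℝ u) = ℝ ∙ 1) {l : ι → ℝ}
    (hl : ∑ i, l i = 0) {r : ℝ} (hr : 0 < r) :
    Fintype.linearCombination ℝ u l ∈ r • convexHull ℝ (range u) ↔
      ∀ i, -l i ≤ r / Fintype.card ι := by
  have hcard : (0 : ℝ) < Fintype.card ι := by exact_mod_cast Fintype.card_pos
  rw [mem_smul_convexHull_range_iff hr]
  constructor
  · rintro ⟨w, hw₀, hw₁, hwl⟩ i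
    obtain ⟨c, hc⟩ : ∃ c : ℝ, c • (1 : ι → ℝ) = w - l := by
      rw [← mem_span_singleton, ← hker, LinearMap.mem_ker, map_sub, hwl, sub_self]
    have hc_eq : c = r / Fintype.card ι := by
      have hsum := congrArg (fun v => ∑ i, v i) hc
      simp only [Pi.smul_apply, Pi.one_apply, smul_eq_mul, mul_one, Finset.sum_const,
        Finset.card_univ, nsmul_eq_mul, Pi.sub_apply, Finset.sum_sub_distrib, hw₁, hl,
        sub_zero] at hsum
      rw [eq_div_iff hcard.ne', mul_comm, hsum]
    have hci := congrFun hc i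
    simp only [Pi.smul_apply, Pi.one_apply, smul_eq_mul, mul_one, Pi.sub_apply] at hci
    linarith [hw₀ i]
  · intro h
    refine ⟨l + (r / Fintype.card ι) • 1, fun i => ?_, ?_, ?_⟩
    · simp only [Pi.add_apply, Pi.smul_apply, Pi.one_apply, smul_eq_mul, mul_one]
      linarith [h i]
    · simp [Finset.sum_add_distrib, hl, mul_div_cancel₀ r hcard.ne']
    · have hone : (1 : ι → ℝ) ∈ LinearMap.ker (Fintype.linearCombination ℝ u) :=
        hker ▸ mem_span_singleton_self 1
      rw [map_add, map_smul, LinearMap.mem_ker.mp hone, smul_zero, add_zero]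

theorem gauge_convexHull_linearCombination
    (hker : LinearMap.ker (Fintype.linearCombination ℝ u) = ℝ ∙ 1) {l : ι → ℝ} (hl : ∑ i, l i = 0) :
    gauge (convexHull ℝ (range u)) (Fintype.linearCombination ℝ u l) =
      Fintype.card ι * Finset.univ.sup' Finset.univ_nonempty (fun i => max 0 (-l i)) := by
  have hcard : (0 : ℝ) < Fintype.card ι := by exact_mod_cast Fintype.card_pos
  refine gauge_eq_of_mem_smul_iff (mul_nonneg hcard.le ?_) fun r hr => ?_
  · exact Finset.le_sup'_of_le _ (Finset.mem_univ (Classical.arbitrary ι)) (le_max_left _ _)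
  · rw [linearCombination_mem_smul_convexHull_iff hker hl hr, ← le_div_iff₀' hcard,
      Finset.sup'_le_iff]
    simp only [Finset.mem_univ, true_implies, max_le_iff, div_nonneg hr.le hcard.le, true_and]

end Gauge

theorem gauge_simplex_eq (n : ℕ) (hn : 0 < n) (u : Fin n → (Fin (n-1) → ℝ))
    (hspan : Submodule.span ℝ (Set.range u) = ⊤)
    (hsum : ∑ i, u i = 0)
    (l : Fin n → ℝ) (hl : ∑ i, l i = 0) :
    gauge (convexHull ℝ (Set.range u)) (∑ i, l i • u i)
      = n * (Finset.univ.sup'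
          (Finset.univ_nonempty_iff.mpr (Fin.pos_iff_nonempty.mp hn))
          (fun i => max 0 (-(l i)))) := by
  have : Nonempty (Fin n) := Fin.pos_iff_nonempty.mp hn
  have hker := ker_linearCombination_eq_span_one u hspan hsum (by simp; omega)
  rw [← Fintype.linearCombination_apply ℝ, gauge_convexHull_linearCombination hker hl,
    Fintype.card_fin]
end

section
/- Let u_1,...,u_n be a circuit in ℝ^{n-1} with Δ = conv{u_i} and ∇ = −Δ. Then Δ ∩ ∇ = { Σ λ_i u_i : Σ λ_i = 0 and |λ_i| ≤ 1/n for all i }. -/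
/-! Since `∑ i, u i = 0`, shifting barycentric weights by `1 / n` turns them into weights summing
to `0`: `Δ` is the set of points `∑ λ i • u i` with `∑ λ i = 0` and `λ i ≥ -1 / n`, and `∇` the
same with `λ i ≤ 1 / n`. By rank–nullity the kernel of `λ ↦ ∑ λ i • u i` is the line through
`(1, …, 1)`, so such balanced coordinates are unique, and a point of `Δ ∩ ∇` has a single `λ`
obeying both bounds. -/

open Finset Module

section Circuit

variable {𝕜 ι E : Type*} [Fintype ι] [AddCommGroup E]

theorem convexHull_range_eq_image_stdSimplex_s12 [Field 𝕜] [LinearOrder 𝕜] [IsStrictOrderedRing 𝕜]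
    [Module 𝕜 E] (v : ι → E) :
    convexHull 𝕜 (Set.range v) = Fintype.linearCombination 𝕜 v '' stdSimplex 𝕜 ι := by
  classical
  rw [← convexHull_rangle_single_eq_stdSimplex, LinearMap.image_convexHull, ← Set.range_comp]
  congr 2
  funext i
  simp [Fintype.linearCombination_apply_single]

theorem ker_linearCombination_eq_span_one_s12 [Field 𝕜] [Module 𝕜 E] [Nonempty ι] {v : ι → E}
    (hspan : Submodule.span 𝕜 (Set.range v) = ⊤) (hv : ∑ i, v i = 0)
    (hdim : finrank 𝕜 E + 1 = Fintype.card ι) :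
    LinearMap.ker (Fintype.linearCombination 𝕜 v) = 𝕜 ∙ (1 : ι → 𝕜) := by
  have one_mem : (1 : ι → 𝕜) ∈ LinearMap.ker (Fintype.linearCombination 𝕜 v) := by
    simpa [Fintype.linearCombination_apply] using hv
  have finrank_ker : finrank 𝕜 (LinearMap.ker (Fintype.linearCombination 𝕜 v)) = 1 := by
    have := LinearMap.finrank_range_add_finrank_ker (Fintype.linearCombination 𝕜 v)
    rw [Fintype.range_linearCombination, hspan, finrank_top, finrank_fintype_fun_eq_card]
      at this
    omega
  refine (Submodule.eq_of_le_of_finrank_le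
    ((Submodule.span_singleton_le_iff_mem _ _).mpr one_mem) ?_).symm
  rw [finrank_ker, finrank_span_singleton one_ne_zero]

theorem eq_of_sum_smul_eq_of_sum_eq_zero [Field 𝕜] [CharZero 𝕜] [Module 𝕜 E] [Nonempty ι]
    {v : ι → E} (hspan : Submodule.span 𝕜 (Set.range v) = ⊤) (hv : ∑ i, v i = 0)
    (hdim : finrank 𝕜 E + 1 = Fintype.card ι) {l m : ι → 𝕜}
    (hl : ∑ i, l i = 0) (hm : ∑ i, m i = 0) (h : ∑ i, l i • v i = ∑ i, m i • v i) :
    l = m := by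
  have hker : l - m ∈ LinearMap.ker (Fintype.linearCombination 𝕜 v) := by
    simp [Fintype.linearCombination_apply, sub_smul, h]
  obtain ⟨t, ht⟩ := Submodule.mem_span_singleton.mp
    (ker_linearCombination_eq_span_one_s12 hspan hv hdim ▸ hker)
  have : t * Fintype.card ι = 0 := by
    simpa [hl, hm, mul_comm] using congrArg (fun f => ∑ i, f i) ht
  have ht0 : t = 0 := by simpa using this
  rw [← sub_eq_zero, ← ht, ht0, zero_smul]

variable [Field 𝕜] [LinearOrder 𝕜] [IsStrictOrderedRing 𝕜] [Module 𝕜 E] [Nonempty ι]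

theorem mem_convexHull_range_iff_of_sum_eq_zero {v : ι → E} (hv : ∑ i, v i = 0) {x : E} :
    x ∈ convexHull 𝕜 (Set.range v) ↔
      ∃ l : ι → 𝕜, ∑ i, l i = 0 ∧ (∀ i, -(1 / Fintype.card ι) ≤ l i) ∧ x = ∑ i, l i • v i := by
  have hcard : ∑ _i : ι, (1 / Fintype.card ι : 𝕜) = 1 := by simp
  have hshift (c : 𝕜) (w : ι → 𝕜) : ∑ i, (w i + c) • v i = ∑ i, w i • v i := by
    simp [add_smul, sum_add_distrib, ← smul_sum, hv]
  rw [convexHull_range_eq_image_stdSimplex_s12]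
  constructor
  · rintro ⟨w, ⟨hw₀, hw₁⟩, rfl⟩
    refine ⟨fun i => w i + -(1 / Fintype.card ι), ?_, fun i => by simpa using hw₀ i, ?_⟩
    · rw [sum_add_distrib, hw₁, sum_neg_distrib, hcard, add_neg_cancel]
    · rw [hshift, Fintype.linearCombination_apply]
  · rintro ⟨l, hl, hl_ge, rfl⟩
    refine ⟨fun i => l i + 1 / Fintype.card ι, ⟨fun i => by linarith [hl_ge i], ?_⟩, ?_⟩
    · rw [sum_add_distrib, hl, hcard, zero_add]
    · rw [Fintype.linearCombination_apply, hshift]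

theorem mem_neg_convexHull_range_iff_of_sum_eq_zero {v : ι → E} (hv : ∑ i, v i = 0) {x : E} :
    x ∈ -convexHull 𝕜 (Set.range v) ↔
      ∃ l : ι → 𝕜, ∑ i, l i = 0 ∧ (∀ i, l i ≤ 1 / Fintype.card ι) ∧ x = ∑ i, l i • v i := by
  rw [Set.mem_neg, mem_convexHull_range_iff_of_sum_eq_zero hv]
  constructor
  · rintro ⟨l, hl, hl_ge, hx⟩
    refine ⟨-l, by simp [hl], fun i => by simpa using neg_le_neg (hl_ge i), ?_⟩
    simp [neg_smul, ← hx]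
  · rintro ⟨l, hl, hl_le, rfl⟩
    refine ⟨-l, by simp [hl], fun i => by simpa using neg_le_neg (hl_le i), ?_⟩
    simp [neg_smul]

end Circuit

theorem simplex_inter_neg_eq (n : ℕ) (hn : 0 < n) (u : Fin n → (Fin (n-1) → ℝ))
    (hspan : Submodule.span ℝ (Set.range u) = ⊤)
    (hsum : ∑ i, u i = 0) :
    convexHull ℝ (Set.range u) ∩ -convexHull ℝ (Set.range u)
      = {x | ∃ l : Fin n → ℝ, ∑ i, l i = 0 ∧ (∀ i, |l i| ≤ 1 / n) ∧ x = ∑ i, l i • u i} := by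
  have : Nonempty (Fin n) := ⟨⟨0, hn⟩⟩
  have hdim : finrank ℝ (Fin (n - 1) → ℝ) + 1 = Fintype.card (Fin n) := by
    simp only [finrank_fintype_fun_eq_card, Fintype.card_fin]; omega
  ext x
  simp only [Set.mem_inter_iff, mem_convexHull_range_iff_of_sum_eq_zero hsum,
    mem_neg_convexHull_range_iff_of_sum_eq_zero hsum, Fintype.card_fin, Set.mem_ofPred_eq, abs_le]
  constructor
  · rintro ⟨⟨l, hl, hl_ge, rfl⟩, m, hm, hm_le, hlm⟩
    obtain rfl := eq_of_sum_smul_eq_of_sum_eq_zero hspan hsum hdim hl hm hlm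
    exact ⟨l, hl, fun i => ⟨hl_ge i, hm_le i⟩, rfl⟩
  · rintro ⟨l, hl, hl_abs, rfl⟩
    exact ⟨⟨l, hl, fun i => (hl_abs i).1, rfl⟩, l, hl, fun i => (hl_abs i).2, rfl⟩
end

section
/- Let K ⊊ 2^[n] be a simplicial complex with ∅ ∈ K, and let τ = (X, Y) be a ridge of Bier(K), i.e., X ∈ K, Y ∉ K, X ⊆ Y, |Y \ X| = 2, say Y = X ∪ {c_1, c_2}. Then τ is contained in exactly two facets of Bier(K): if both X∪{c_1} and X∪{c_2} are in K the two facets are (X∪{c_1}, Y) and (X∪{c_2}, Y); if neither is in K the two facets are (X, X∪{c_1}) and (X, X∪{c_2}); if exactly one, say X∪{c_1} ∈ K, the two facets are (X∪{c_1}, Y) and (X, X∪{c_2}). -/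
/-!
A facet `(A, C)` containing the ridge `(X, Y)` is a covering pair `X ⊆ A ⋖ C ⊆ Y` of the Boolean
square `[X, Y]`, and that square has exactly four covering pairs: two starting at `X` and two
ending at `Y`. Since `X ∈ K` and `Y ∉ K`, which two of them are facets is decided by whether
`X ∪ {c₁}` and `X ∪ {c₂}` lie in `K`.
-/

/-- The facets of `Bier(K)` (in interval notation) containing the face `(X, Y)`. -/
def facetsContaining {n : ℕ} (K : Set (Finset (Fin n))) (X Y : Finset (Fin n)) :
    Set (Finset (Fin n) × Finset (Fin n)) :=
  {p | p.1 ∈ K ∧ p.2 ∉ K ∧ p.1 ⊆ p.2 ∧ (p.2 \ p.1).card = 1 ∧ X ⊆ p.1 ∧ p.2 ⊆ Y}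

open Finset

section

variable {α : Type*} [DecidableEq α]

lemma Finset.eq_or_eq_insert_or_eq_insert_insert {X A : Finset α} {a b : α} (hXA : X ⊆ A)
    (hA : A ⊆ insert a (insert b X)) :
    A = X ∨ A = insert a X ∨ A = insert b X ∨ A = insert a (insert b X) := by
  by_cases ha : a ∈ A
  · rw [insert_comm] at hA ⊢
    rcases (wcovBy_insert _ b).eq_or_eq (insert_subset ha hXA) hA with h | h
    · exact .inr (.inl h)
    · exact .inr (.inr (.inr h))
  · rcases (wcovBy_insert X b).eq_or_eq hXA ((subset_insert_iff_of_notMem ha).1 hA) with h | h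
    · exact .inl h
    · exact .inr (.inr (.inl h))

lemma Finset.covBy_within_insert_insert_iff {X A C : Finset α} {a b : α} (hab : a ≠ b)
    (ha : a ∉ X) (hb : b ∉ X) :
    X ⊆ A ∧ A ⋖ C ∧ C ⊆ insert a (insert b X) ↔
      (A, C) ∈ ({(X, insert a X), (X, insert b X), (insert a X, insert a (insert b X)),
        (insert b X, insert a (insert b X))} : Set (Finset α × Finset α)) := by
  simp only [Set.mem_insert_iff, Set.mem_singleton_iff, Prod.mk.injEq]
  constructor
  · rintro ⟨hXA, hAC, hCY⟩
    obtain ⟨c, hcA, rfl⟩ := covBy_iff_exists_insert.1 hAC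
    have hAY := (subset_insert c A).trans hCY
    have hcY := hCY (mem_insert_self c A)
    rcases eq_or_eq_insert_or_eq_insert_insert hXA hAY with rfl | rfl | rfl | rfl
    · simp only [mem_insert, hcA, or_false] at hcY
      rcases hcY with rfl | rfl <;> simp
    all_goals simp_all [insert_comm]
  · have hbaX : b ∉ insert a X := by simp [hab.symm, hb]
    have habX : a ∉ insert b X := by simp [hab, ha]
    rintro (⟨rfl, rfl⟩ | ⟨rfl, rfl⟩ | ⟨rfl, rfl⟩ | ⟨rfl, rfl⟩)
    · exact ⟨subset_rfl, covBy_insert ha, insert_subset_insert a (subset_insert b _)⟩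
    · refine ⟨subset_rfl, covBy_insert hb, ?_⟩
      rw [insert_comm]
      exact insert_subset_insert b (subset_insert a _)
    · exact ⟨subset_insert a X, by rw [insert_comm]; exact covBy_insert hbaX, subset_rfl⟩
    · exact ⟨subset_insert b X, covBy_insert habX, subset_rfl⟩

end

lemma mem_facetsContaining_iff {n : ℕ} {K : Set (Finset (Fin n))} {X Y : Finset (Fin n)}
    {p : Finset (Fin n) × Finset (Fin n)} :
    p ∈ facetsContaining K X Y ↔ p.1 ∈ K ∧ p.2 ∉ K ∧ (X ⊆ p.1 ∧ p.1 ⋖ p.2 ∧ p.2 ⊆ Y) := by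
  rw [covBy_iff_card_sdiff_eq_one]
  simp only [facetsContaining, Set.mem_ofPred_eq]
  tauto

theorem ridge_in_exactly_two_facets_general (n : ℕ) (K : Set (Finset (Fin n)))
    (X Y : Finset (Fin n)) (hX : X ∈ K) (hY : Y ∉ K)
    (c₁ c₂ : Fin n) (hc : c₁ ≠ c₂) (hc₁ : c₁ ∉ X) (hc₂ : c₂ ∉ X)
    (hYeq : Y = insert c₁ (insert c₂ X)) :
    (insert c₁ X ∈ K → insert c₂ X ∈ K →
        facetsContaining K X Y = {(insert c₁ X, Y), (insert c₂ X, Y)}) ∧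
    (insert c₁ X ∉ K → insert c₂ X ∉ K →
        facetsContaining K X Y = {(X, insert c₁ X), (X, insert c₂ X)}) ∧
    (insert c₁ X ∈ K → insert c₂ X ∉ K →
        facetsContaining K X Y = {(insert c₁ X, Y), (X, insert c₂ X)}) := by
  subst hYeq
  refine ⟨fun h₁ h₂ ↦ ?_, fun h₁ h₂ ↦ ?_, fun h₁ h₂ ↦ ?_⟩ <;>
  · ext ⟨A, C⟩
    rw [mem_facetsContaining_iff, covBy_within_insert_insert_iff hc hc₁ hc₂]
    simp only [Set.mem_insert_iff, Set.mem_singleton_iff, Prod.mk.injEq]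
    aesop

theorem ridge_in_exactly_two_facets (n : ℕ) (K : Set (Finset (Fin n)))
    (hK : ∀ s ∈ K, ∀ t ⊆ s, t ∈ K) (h0 : ∅ ∈ K)
    (hu : (Finset.univ : Finset (Fin n)) ∉ K)
    (X Y : Finset (Fin n)) (hX : X ∈ K) (hY : Y ∉ K) (hXY : X ⊆ Y)
    (c₁ c₂ : Fin n) (hc : c₁ ≠ c₂) (hc₁ : c₁ ∉ X) (hc₂ : c₂ ∉ X)
    (hYeq : Y = insert c₁ (insert c₂ X)) :
    (insert c₁ X ∈ K → insert c₂ X ∈ K →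
        facetsContaining K X Y = {(insert c₁ X, Y), (insert c₂ X, Y)}) ∧
    (insert c₁ X ∉ K → insert c₂ X ∉ K →
        facetsContaining K X Y = {(X, insert c₁ X), (X, insert c₂ X)}) ∧
    (insert c₁ X ∈ K → insert c₂ X ∉ K →
        facetsContaining K X Y = {(insert c₁ X, Y), (X, insert c₂ X)}) :=
  ridge_in_exactly_two_facets_general n K X Y hX hY c₁ c₂ hc hc₁ hc₂ hYeq
end
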